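/- The order-preserving hypothesis in the SSTAP optimality theorem cannot be dropped: there exist n = 3 jobs arriving in order x₁, x₂, x₃, workers p₁, p₂, p₃, a threshold α = 0.1, and a function f that is not order-preserving in its second argument — concretely, f(x₁,p₁)=0.5, f(x₁,p₂)=0.4, f(x₁,p₃)=0.7, f(x₂,p₁)=0.08, f(x₂,p₂)=0.1, f(x₂,p₃)=0.03, f(x₃,p₁)=0.5, f(x₃,p₂)=0.4, f(x₃,p₃)=0.1 — such that every run of the greedy policy achieves reward exactly 2 (it assigns x₁ to p₂, rejects x₂, and assigns x₃ to p₃), while the assignment x₁ ↦ p₁, x₂ ↦ p₂, x₃ ↦ p₃ achieves the maximum reward 3. -/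

import Mathlib

/-!
Greedy gives `x₁` its cheapest eligible worker `p₂`, which is the only worker meeting the
threshold for `x₂`, so `x₂` is rejected, while the diagonal assignment serves all three jobs.
Order preservation fails because `p₁` is cheaper than `p₃` for `x₁` but dearer for `x₂`.
-/

open Finset

/-- A partial assignment of jobs to workers is injective: no worker serves two jobs. -/
def PartialInjective {n : ℕ} (A : Fin n → Option (Fin n)) : Prop :=
  ∀ i i' j, A i = some j → A i' = some j → i = i'

/-- The SSTAP reward of an assignment: the number of jobs assigned to a worker meeting
the threshold. -/
noncomputable def sstapReward {n : ℕ} (x p : Fin n → ℝ) (f : ℝ → ℝ → ℝ) (α : ℝ)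
    (A : Fin n → Option (Fin n)) : ℕ :=
  (Finset.univ.filter (fun i => ∃ j, A i = some j ∧ α ≤ f (x i) (p j))).card

/-- Worker `j` is still available when job `i` arrives (no earlier job got it). -/
def AvailableAt {n : ℕ} (A : Fin n → Option (Fin n)) (i j : Fin n) : Prop :=
  ∀ i' : Fin n, i' < i → A i' ≠ some j

/-- `A` is a run of the greedy policy: every assigned job gets an available worker
meeting the threshold that minimizes `f (x i) (p ·)` among the available workers
meeting the threshold, and a job is rejected only when no available worker meets the
threshold. -/
def IsGreedyRun {n : ℕ} (x p : Fin n → ℝ) (f : ℝ → ℝ → ℝ) (α : ℝ)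
    (A : Fin n → Option (Fin n)) : Prop :=
  ∀ i : Fin n,
    (∀ j, A i = some j →
      AvailableAt A i j ∧ α ≤ f (x i) (p j) ∧
        ∀ j', AvailableAt A i j' → α ≤ f (x i) (p j') → f (x i) (p j) ≤ f (x i) (p j')) ∧
    (A i = none → ∀ j, AvailableAt A i j → f (x i) (p j) < α)

section Table

variable {ι κ α β γ : Type*} [Zero γ]

noncomputable def ofTable (x : ι → α) (p : κ → β) (M : ι → κ → γ) : α → β → γ :=
  Function.extend x (fun i => Function.extend p (M i) 0) 0

theorem ofTable_apply_apply {x : ι → α} {p : κ → β} (hx : x.Injective) (hp : p.Injective)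
    (M : ι → κ → γ) (i : ι) (j : κ) : ofTable x p M (x i) (p j) = M i j := by
  rw [ofTable, hx.extend_apply, hp.extend_apply]

end Table

theorem availableAt_zero {n : ℕ} (A : Fin (n + 1) → Option (Fin (n + 1))) (j : Fin (n + 1)) :
    AvailableAt A 0 j :=
  fun i' hi' => absurd hi' (Fin.not_lt_zero i')

theorem partialInjective_some_iff {n : ℕ} {σ : Fin n → Fin n} :
    PartialInjective (fun i => some (σ i)) ↔ σ.Injective := by
  simp only [PartialInjective, Option.some.injEq]
  exact ⟨fun h i i' hii' => h i i' _ rfl hii'.symm, fun h i i' j hi hi' => h (hi.trans hi'.symm)⟩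

section Greedy

variable {n : ℕ} {x p : Fin n → ℝ} {f : ℝ → ℝ → ℝ} {α : ℝ}

theorem sstapReward_le (A : Fin n → Option (Fin n)) : sstapReward x p f α A ≤ n :=
  (card_filter_le _ _).trans_eq (card_fin n)

theorem sstapReward_some_eq {σ : Fin n → Fin n} (h : ∀ i, α ≤ f (x i) (p (σ i))) :
    sstapReward x p f α (fun i => some (σ i)) = n := by
  rw [sstapReward, filter_true_of_mem fun i _ => ⟨σ i, rfl, h i⟩, card_univ, Fintype.card_fin]

variable {A : Fin n → Option (Fin n)}

theorem IsGreedyRun.eq_some_of_forall_lt (hA : IsGreedyRun x p f α A) {i j : Fin n}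
    (hj : AvailableAt A i j) (hα : α ≤ f (x i) (p j))
    (hlt : ∀ j', j' ≠ j → AvailableAt A i j' → α ≤ f (x i) (p j') →
      f (x i) (p j) < f (x i) (p j')) :
    A i = some j := by
  rcases hAi : A i with _ | j'
  · exact absurd ((hA i).2 hAi j hj) (not_lt.2 hα)
  · obtain ⟨hj', hα', hmin⟩ := (hA i).1 j' hAi
    by_contra hne
    exact (hmin j hj hα).not_gt (hlt j' (fun h => hne (congrArg some h)) hj' hα')

theorem IsGreedyRun.eq_none_of_forall_lt (hA : IsGreedyRun x p f α A) {i : Fin n}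
    (h : ∀ j, AvailableAt A i j → f (x i) (p j) < α) :
    A i = none := by
  rcases hAi : A i with _ | j
  · rfl
  · obtain ⟨hj, hα, -⟩ := (hA i).1 j hAi
    exact absurd (h j hj) (not_lt.2 hα)

end Greedy

def exampleTable : Matrix (Fin 3) (Fin 3) ℝ :=
  !![0.5, 0.4, 0.7;
     0.08, 0.1, 0.03;
     0.5, 0.4, 0.1]

section Example

variable {x p : Fin 3 → ℝ} {f : ℝ → ℝ → ℝ} (hf : ∀ i j, f (x i) (p j) = exampleTable i j)
include hf

theorem apply_eq_of_exampleTable :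
    f (x 0) (p 0) = 0.5 ∧ f (x 0) (p 1) = 0.4 ∧ f (x 0) (p 2) = 0.7 ∧
    f (x 1) (p 0) = 0.08 ∧ f (x 1) (p 1) = 0.1 ∧ f (x 1) (p 2) = 0.03 ∧
    f (x 2) (p 0) = 0.5 ∧ f (x 2) (p 1) = 0.4 ∧ f (x 2) (p 2) = 0.1 := by
  simp only [hf]
  norm_num [exampleTable, Matrix.cons_val_two, Matrix.vecHead, Matrix.vecTail]

theorem not_orderPreserving_of_exampleTable :
    ¬ (∀ j j' : Fin 3, (∀ i, f (x i) (p j) ≤ f (x i) (p j')) ∨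
      (∀ i, f (x i) (p j') ≤ f (x i) (p j))) := by
  intro h
  rcases h 0 2 with h02 | h20
  · have := h02 1
    norm_num [apply_eq_of_exampleTable hf] at this
  · have := h20 0
    norm_num [apply_eq_of_exampleTable hf] at this

theorem eq_of_isGreedyRun_of_exampleTable {A : Fin 3 → Option (Fin 3)}
    (hA : IsGreedyRun x p f 0.1 A) : A = ![some 1, none, some 2] := by
  have hval := apply_eq_of_exampleTable hf
  have h0 : A 0 = some 1 := hA.eq_some_of_forall_lt (availableAt_zero A 1)
    (by norm_num [hval]) fun j _ _ _ => by
      fin_cases j <;> simp_all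
      all_goals norm_num
  have h1 : A 1 = none := hA.eq_none_of_forall_lt fun j hj => by
    fin_cases j
    · norm_num [hval]
    · exact absurd h0 (hj 0 Fin.zero_lt_one)
    · simp [hval]
      norm_num
  have avail2 : ∀ j, AvailableAt A 2 j ↔ A 0 ≠ some j ∧ A 1 ≠ some j := fun j => by
    simp [AvailableAt, Fin.forall_fin_succ]
  have h2 : A 2 = some 2 := hA.eq_some_of_forall_lt (by simp [avail2, h0, h1])
    (by norm_num [hval]) fun j _ _ _ => by
      fin_cases j <;> simp_all
      all_goals norm_num
  funext i
  fin_cases i <;> assumption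

theorem sstapReward_greedy_of_exampleTable :
    sstapReward x p f 0.1 ![some 1, none, some 2] = 2 := by
  rw [sstapReward, card_eq_two]
  refine ⟨0, 2, by decide, ?_⟩
  ext i
  fin_cases i <;> simp [apply_eq_of_exampleTable hf]
  all_goals norm_num

theorem sstapReward_diagonal_of_exampleTable :
    sstapReward x p f 0.1 (fun i => some i) = 3 :=
  sstapReward_some_eq (σ := id) fun i => by
    fin_cases i <;> simp [apply_eq_of_exampleTable hf]
    all_goals norm_num

end Example

theorem greedy_suboptimal_without_order_preservation :
    ∃ (x p : Fin 3 → ℝ) (f : ℝ → ℝ → ℝ),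
      -- the concrete values of the example:
      (f (x 0) (p 0) = 0.5 ∧ f (x 0) (p 1) = 0.4 ∧ f (x 0) (p 2) = 0.7 ∧
       f (x 1) (p 0) = 0.08 ∧ f (x 1) (p 1) = 0.1 ∧ f (x 1) (p 2) = 0.03 ∧
       f (x 2) (p 0) = 0.5 ∧ f (x 2) (p 1) = 0.4 ∧ f (x 2) (p 2) = 0.1) ∧
      -- `f` is not order-preserving in its second argument:
      ¬ (∀ j j' : Fin 3, (∀ i, f (x i) (p j) ≤ f (x i) (p j')) ∨
          (∀ i, f (x i) (p j') ≤ f (x i) (p j))) ∧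
      -- every run of the greedy policy assigns `x₁ ↦ p₂`, rejects `x₂`, assigns
      -- `x₃ ↦ p₃`, and achieves reward exactly `2`:
      (∀ A : Fin 3 → Option (Fin 3), IsGreedyRun x p f 0.1 A →
        A 0 = some 1 ∧ A 1 = none ∧ A 2 = some 2 ∧ sstapReward x p f 0.1 A = 2) ∧
      -- while the assignment `x₁ ↦ p₁, x₂ ↦ p₂, x₃ ↦ p₃` achieves reward `3` ...
      (PartialInjective (fun i : Fin 3 => (some i : Option (Fin 3))) ∧
        sstapReward x p f 0.1 (fun i : Fin 3 => (some i : Option (Fin 3))) = 3) ∧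
      -- ... which is the maximum reward over all assignments:
      (∀ B : Fin 3 → Option (Fin 3), PartialInjective B →
        sstapReward x p f 0.1 B ≤ 3) := by
  set x : Fin 3 → ℝ := fun i => ((i : ℕ) : ℝ)
  have hf : ∀ i j, ofTable x x exampleTable (x i) (x j) = exampleTable i j :=
    ofTable_apply_apply (Nat.cast_injective.comp Fin.val_injective)
      (Nat.cast_injective.comp Fin.val_injective) exampleTable
  refine ⟨x, x, ofTable x x exampleTable, ?_, not_orderPreserving_of_exampleTable hf,
    fun A hA => ?_, ⟨partialInjective_some_iff.2 Function.injective_id,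
      sstapReward_diagonal_of_exampleTable hf⟩, fun B _ => sstapReward_le B⟩
  · exact apply_eq_of_exampleTable hf
  · obtain rfl := eq_of_isGreedyRun_of_exampleTable hf hA
    exact ⟨rfl, rfl, rfl, sstapReward_greedy_of_exampleTable hf⟩
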